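/- Fix β ∈ [0,2] and measures M_0, M_1, M_2, ... ∈ 𝔐^β. Then M_n → M_0 vaguely on ℝ^d \ {0} (i.e., ∫ f dM_n → ∫ f dM_0 for every bounded continuous f vanishing near 0 and near infinity) if and only if M_n^β → M_0^β vaguely on ℝ^d \ {0}. -/

import Mathlib

/-!
Spherical inversion `x ↦ x / |x|²` is a measurable involution of `ℝ^d` which swaps neighbourhoods
of `0` and of infinity. By change of variables, `∫ f dM^β = ∫ |x|^{2+β} f(x/|x|²) M(dx)`, and the
transformed integrand is again a vague test function; so vague convergence of `M_n` implies that
of `M_n^β`. Since the two densities `|x|^{2+β}` and `|x/|x|²|^{2+β}` multiply to `1` off the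
origin, `(M^β)^β = M` for measures without an atom at `0`, which gives the converse.
-/

open MeasureTheory ENNReal Filter Topology Set

noncomputable section

abbrev Rd (d : ℕ) := EuclideanSpace ℝ (Fin d)

/-- The spherical inversion map `x ↦ x / |x|²` (sending `0` to `0`). -/
def sphInv {d : ℕ} (x : Rd d) : Rd d := (‖x‖ ^ 2)⁻¹ • x

/-- The β-inversion of a measure `M`:
`M^β(A) = ∫ 1_A(x/|x|²) |x|^{2+β} M(dx)`. -/
def betaInv {d : ℕ} (β : ℝ) (M : Measure (Rd d)) : Measure (Rd d) :=
  Measure.map sphInv (M.withDensity fun x => ENNReal.ofReal (‖x‖ ^ (2 + β)))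

/-- `M ∈ 𝔐^β`: `M({0}) = 0` and `∫ (|x|² ∧ |x|^β) M(dx) < ∞`. -/
def MemM {d : ℕ} (β : ℝ) (M : Measure (Rd d)) : Prop :=
  M {0} = 0 ∧ ∫⁻ x, ENNReal.ofReal (min (‖x‖ ^ (2 : ℝ)) (‖x‖ ^ β)) ∂M < ⊤

/-- Vague convergence on `ℝ^d \ {0}`: convergence of integrals of bounded continuous
functions vanishing on a neighborhood of `0` and a neighborhood of infinity. -/
def VagueConv {d : ℕ} (M : ℕ → Measure (Rd d)) (M0 : Measure (Rd d)) : Prop :=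
  ∀ f : Rd d → ℝ, Continuous f → (∃ C : ℝ, ∀ x, |f x| ≤ C) →
    (∃ ε N : ℝ, 0 < ε ∧ ∀ x : Rd d, ‖x‖ < ε ∨ N < ‖x‖ → f x = 0) →
    Tendsto (fun n => ∫ x, f x ∂(M n)) atTop (𝓝 (∫ x, f x ∂M0))

lemma Measure.withDensity_map_eq_map_withDensity_comp {α γ : Type*} [MeasurableSpace α]
    [MeasurableSpace γ] {φ : α → γ} (hφ : Measurable φ) (μ : Measure α) {g : γ → ℝ≥0∞}
    (hg : Measurable g) :
    (μ.map φ).withDensity g = (μ.withDensity (g ∘ φ)).map φ := by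
  ext s hs
  rw [withDensity_apply _ hs, Measure.map_apply hφ hs, withDensity_apply _ (hφ hs),
    ← lintegral_indicator hs, ← lintegral_indicator (hφ hs), lintegral_map (hg.indicator hs) hφ]
  rfl

section Inversion

variable {d : ℕ}

@[simp]
lemma sphInv_zero : sphInv (0 : Rd d) = 0 := by simp [sphInv]

@[simp]
lemma norm_sphInv (x : Rd d) : ‖sphInv x‖ = ‖x‖⁻¹ := by
  rcases eq_or_ne x 0 with rfl | hx
  · simp
  · have hn : ‖x‖ ≠ 0 := norm_ne_zero_iff.2 hx
    rw [sphInv, norm_smul, norm_inv, norm_pow, norm_norm]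
    field_simp

lemma sphInv_involutive : Function.Involutive (sphInv : Rd d → Rd d) := by
  intro x
  rcases eq_or_ne x 0 with rfl | hx
  · simp
  · have hn : ‖x‖ ≠ 0 := norm_ne_zero_iff.2 hx
    rw [sphInv, norm_sphInv, sphInv, smul_smul, inv_pow, inv_inv, mul_inv_cancel₀ (by positivity),
      one_smul]

lemma measurable_sphInv : Measurable (sphInv : Rd d → Rd d) :=
  ((measurable_norm.pow_const 2).inv).smul measurable_id

lemma continuousAt_sphInv {x : Rd d} (hx : x ≠ 0) : ContinuousAt sphInv x :=
  (((continuous_norm.pow 2).continuousAt).inv₀ (pow_ne_zero _ (norm_ne_zero_iff.2 hx))).smul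
    continuousAt_id

end Inversion

section BetaInversion

variable {d : ℕ} (β : ℝ)

lemma measurable_ofReal_norm_rpow :
    Measurable fun x : Rd d => ENNReal.ofReal (‖x‖ ^ β) :=
  ENNReal.measurable_ofReal.comp (measurable_norm.pow_const β)

lemma integral_betaInv (M : Measure (Rd d)) {f : Rd d → ℝ} (hf : Continuous f) :
    ∫ y, f y ∂(betaInv β M) = ∫ x, ‖x‖ ^ (2 + β) * f (sphInv x) ∂M := by
  rw [betaInv, integral_map measurable_sphInv.aemeasurable hf.aestronglyMeasurable,
    integral_withDensity_eq_integral_toReal_smul (measurable_ofReal_norm_rpow _)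
      (ae_of_all _ fun _ => ofReal_lt_top)]
  simp only [toReal_ofReal (Real.rpow_nonneg (norm_nonneg _) _), smul_eq_mul]

lemma betaInv_betaInv {M : Measure (Rd d)} (hM : M {0} = 0) :
    betaInv β (betaInv β M) = M := by
  set w : Rd d → ℝ≥0∞ := fun x => ENNReal.ofReal (‖x‖ ^ (2 + β))
  have hw : Measurable w := measurable_ofReal_norm_rpow _
  have hinv : ∀ x ≠ 0, w x * w (sphInv x) = 1 := by
    intro x hx
    have hpos : 0 < ‖x‖ ^ (2 + β) := Real.rpow_pos_of_pos (norm_pos_iff.2 hx) _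
    rw [← ENNReal.ofReal_mul hpos.le, norm_sphInv, Real.inv_rpow (norm_nonneg x),
      mul_inv_cancel₀ hpos.ne', ofReal_one]
  have hdensity : (fun x => w x * w (sphInv x)) =ᵐ[M] 1 :=
    eventually_of_mem (compl_mem_ae_iff.2 hM) hinv
  calc betaInv β (betaInv β M)
      = (((M.withDensity w).withDensity (w ∘ sphInv)).map sphInv).map sphInv := by
        rw [betaInv, betaInv,
          Measure.withDensity_map_eq_map_withDensity_comp measurable_sphInv _ hw]
    _ = (M.withDensity w).withDensity (w ∘ sphInv) := by
        rw [Measure.map_map measurable_sphInv measurable_sphInv, sphInv_involutive.comp_self,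
          Measure.map_id]
    _ = M := by
        rw [← withDensity_mul _ hw (hw.comp measurable_sphInv)]
        exact (withDensity_congr_ae hdensity).trans withDensity_one

end BetaInversion

def VanishesNearZeroAndInfinity {d : ℕ} (f : Rd d → ℝ) : Prop :=
  ∃ ε N : ℝ, 0 < ε ∧ ∀ x : Rd d, ‖x‖ < ε ∨ N < ‖x‖ → f x = 0

namespace VanishesNearZeroAndInfinity

variable {d : ℕ} {f : Rd d → ℝ}

lemma comp_sphInv (hf : VanishesNearZeroAndInfinity f) :
    VanishesNearZeroAndInfinity fun x => f (sphInv x) := by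
  obtain ⟨ε, N, hε, hvan⟩ := hf
  refine ⟨(max N 1)⁻¹, ε⁻¹, by positivity, fun x hx => hvan _ ?_⟩
  rw [norm_sphInv]
  rcases (norm_nonneg x).eq_or_lt with hx0 | hxpos
  · exact Or.inl (by simpa [← hx0] using hε)
  rcases hx with hsmall | hlarge
  · have hN : N < ‖x‖⁻¹ :=
      (le_max_left N 1).trans_lt ((lt_inv_comm₀ hxpos (lt_max_of_lt_right one_pos)).1 hsmall)
    exact Or.inr hN
  · exact Or.inl ((inv_lt_comm₀ hxpos hε).2 hlarge)

lemma mul_left (g : Rd d → ℝ) (hf : VanishesNearZeroAndInfinity f) :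
    VanishesNearZeroAndInfinity fun x => g x * f x := by
  obtain ⟨ε, N, hε, hvan⟩ := hf
  exact ⟨ε, N, hε, fun x hx => mul_eq_zero_of_right _ (hvan x hx)⟩

lemma hasCompactSupport (hf : VanishesNearZeroAndInfinity f) : HasCompactSupport f := by
  obtain ⟨ε, N, -, hvan⟩ := hf
  exact HasCompactSupport.intro (isCompact_closedBall 0 N)
    fun x hx => hvan x (Or.inr (by simpa using hx))

lemma continuous_of_continuousAt_ne_zero (hf : VanishesNearZeroAndInfinity f)
    (hcont : ∀ x ≠ 0, ContinuousAt f x) : Continuous f := by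
  obtain ⟨ε, N, hε, hvan⟩ := hf
  refine continuous_iff_continuousAt.2 fun x => ?_
  rcases eq_or_ne x 0 with rfl | hx
  · have hzero : (fun _ => (0 : ℝ)) =ᶠ[𝓝 0] f :=
      eventually_of_mem (Metric.ball_mem_nhds 0 hε) fun y hy =>
        (hvan y (Or.inl (by simpa using hy))).symm
    exact continuousAt_const.congr hzero
  · exact hcont x hx

end VanishesNearZeroAndInfinity

lemma continuous_norm_rpow_mul_comp_sphInv {d : ℕ} (γ : ℝ) {f : Rd d → ℝ} (hf : Continuous f)
    (hvan : VanishesNearZeroAndInfinity f) : Continuous fun x => ‖x‖ ^ γ * f (sphInv x) :=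
  (hvan.comp_sphInv.mul_left _).continuous_of_continuousAt_ne_zero fun _ hx =>
    (continuous_norm.continuousAt.rpow_const (Or.inl (norm_ne_zero_iff.2 hx))).mul
      (hf.continuousAt.comp (continuousAt_sphInv hx))

lemma vagueConv_betaInv {d : ℕ} (β : ℝ) {M : ℕ → Measure (Rd d)} {M0 : Measure (Rd d)}
    (h : VagueConv M M0) : VagueConv (fun n => betaInv β (M n)) (betaInv β M0) := by
  intro f hf _ (hvan : VanishesNearZeroAndInfinity f)
  have hgvan := hvan.comp_sphInv.mul_left fun x => ‖x‖ ^ (2 + β)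
  have hgc := continuous_norm_rpow_mul_comp_sphInv (2 + β) hf hvan
  obtain ⟨C, hC⟩ := hgc.bounded_above_of_compact_support hgvan.hasCompactSupport
  simpa only [integral_betaInv β _ hf] using h _ hgc ⟨C, hC⟩ hgvan

theorem stmt4_general {d : ℕ} (β : ℝ)
    (M : ℕ → Measure (Rd d)) (M0 : Measure (Rd d))
    (hM : ∀ n, MemM β (M n)) (hM0 : MemM β M0) :
    VagueConv M M0 ↔ VagueConv (fun n => betaInv β (M n)) (betaInv β M0) := by
  refine ⟨vagueConv_betaInv β, fun h => ?_⟩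
  have hMM : ∀ n, betaInv β (betaInv β (M n)) = M n := fun n => betaInv_betaInv β (hM n).1
  simpa only [hMM, betaInv_betaInv β hM0.1] using vagueConv_betaInv β h

theorem stmt4 {d : ℕ} (β : ℝ) (hβ : β ∈ Set.Icc (0 : ℝ) 2)
    (M : ℕ → Measure (Rd d)) (M0 : Measure (Rd d))
    (hM : ∀ n, MemM β (M n)) (hM0 : MemM β M0) :
    VagueConv M M0 ↔ VagueConv (fun n => betaInv β (M n)) (betaInv β M0) :=
  stmt4_general β M M0 hM hM0
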